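/- Let b be a connected locally finite weighted graph over V with values in an ordered field, K ⊆ V finite connected, and a ∈ K. Then G_K(a) := 1/ρ(cap_K(a)/b(a)) satisfies G_K(a) ≥ Σ_{n=0}^∞ π_K^{(n)}(a,a), where π_K = π_K^b is the real transition matrix and π_K^{(n)} its n-step entries. -/

import Mathlib

open Classical
open scoped ENNReal

namespace NAG

/-- The real part of an at most finite element of an ordered field:
the supremum of the rationals below it. -/
noncomputable def rp {K : Type*} [Field K] [LinearOrder K] [IsStrictOrderedRing K] (k : K) : ℝ :=
  sSup {r : ℝ | ∃ q : ℚ, r = (q : ℝ) ∧ (q : K) ≤ k}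

/-- `k₁ ≃ k₂` : the quotient is bounded above and below by positive rationals. -/
def Comparable {K : Type*} [Field K] [LinearOrder K] [IsStrictOrderedRing K] (k₁ k₂ : K) : Prop :=
  ∃ c₁ c₂ : ℚ, 0 < c₁ ∧ 0 < c₂ ∧ (c₁ : K) < k₁ / k₂ ∧ k₁ / k₂ < (c₂ : K)

/-- `k₁ ≺≺ k₂` : the quotient is smaller than every positive rational. -/
def MuchLT {K : Type*} [Field K] [LinearOrder K] [IsStrictOrderedRing K] (k₁ k₂ : K) : Prop :=
  ∀ c : ℚ, 0 < c → k₁ / k₂ < (c : K)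

/-- `k₁ ≾ k₂` : the quotient is bounded above by some positive rational. -/
def LessSim {K : Type*} [Field K] [LinearOrder K] [IsStrictOrderedRing K] (k₁ k₂ : K) : Prop :=
  ∃ c : ℚ, 0 < c ∧ k₁ / k₂ < (c : K)

/-- A (locally finite) weighted graph over `V` with values in an ordered field `K`. -/
structure Graph (V K : Type*) [Field K] [LinearOrder K] [IsStrictOrderedRing K] where
  w : V → V → K
  symm : ∀ x y, w x y = w y x
  nonneg : ∀ x y, 0 ≤ w x y
  loopless : ∀ x, w x x = 0
  locFin : ∀ x, {y | w x y ≠ 0}.Finite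

variable {V K : Type*} [Field K] [LinearOrder K] [IsStrictOrderedRing K]

/-- `b(x) = Σ_y b(x,y)`. -/
noncomputable def Graph.deg (G : Graph V K) (x : V) : K := ∑ᶠ y, G.w x y

def Graph.Adj (G : Graph V K) (x y : V) : Prop := 0 < G.w x y

def Graph.Connected (G : Graph V K) : Prop :=
  ∀ x y : V, ∃ (n : ℕ) (p : ℕ → V), p 0 = x ∧ p n = y ∧ ∀ i < n, G.Adj (p i) (p (i + 1))

def Graph.ConnectedOn (G : Graph V K) (S : Set V) : Prop :=
  ∀ x ∈ S, ∀ y ∈ S, ∃ (n : ℕ) (p : ℕ → V),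
    p 0 = x ∧ p n = y ∧ (∀ i ≤ n, p i ∈ S) ∧ ∀ i < n, G.Adj (p i) (p (i + 1))

/-- normalized weight `p(x,y) = b(x,y)/b(x)`. -/
noncomputable def Graph.p (G : Graph V K) (x y : V) : K := G.w x y / G.deg x

/-- The real transition matrix `π_U^b`. -/
noncomputable def Graph.pi (G : Graph V K) (U : Set V) (x y : V) : ℝ :=
  if x ∈ U then rp (G.p x y) else if x = y then 1 else 0

/-- A directed path of length `n` from `x` to `y` for a real kernel `m`. -/
def DirPath {V : Type*} (m : V → V → ℝ) (x y : V) (n : ℕ) (p : ℕ → V) : Prop :=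
  p 0 = x ∧ p n = y ∧ ∀ i < n, 0 < m (p i) (p (i + 1))

/-- `x → y` : reachability by directed paths. -/
def Reaches {V : Type*} (m : V → V → ℝ) (x y : V) : Prop :=
  x = y ∨ ∃ n p, DirPath m x y n p

/-- `x ↔ y` : mutual reachability (same strongly connected component). -/
def SameSCC {V : Type*} (m : V → V → ℝ) (x y : V) : Prop :=
  Reaches m x y ∧ Reaches m y x

/-- The Laplacian `Δf(x) = (1/b(x)) Σ_y b(x,y)(f(x) − f(y))`. -/
noncomputable def Graph.lap (G : Graph V K) (f : V → K) (x : V) : K :=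
  (∑ᶠ y, G.w x y * (f x - f y)) / G.deg x

/-- `v` solves the Dirichlet problem for the finite set `S` and `a ∈ S`. -/
def Graph.IsDirichletSol (G : Graph V K) (S : Finset V) (a : V) (v : V → K) : Prop :=
  v a = 1 ∧ (∀ x ∈ S, x ≠ a → G.lap v x = 0) ∧ ∀ x ∉ S, v x = 0

/-- `n`-step entries of a real kernel. -/
noncomputable def matpow {V : Type*} (m : V → V → ℝ) : ℕ → V → V → ℝ
  | 0 => fun x y => if x = y then 1 else 0
  | n + 1 => fun x y => ∑ᶠ z, matpow m n x z * m z y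

/-
Work in `K` first. The Dirichlet solution `v` is nonnegative by the minimum principle, and by
reversibility `b(w) p(w,z) = b(z,w)` the function `z ↦ v(z) b(z) / (cap(a) b(a))`, with
`cap(a) = Δv(a)`, solves `g = 1ₐ + g Pₛ` on `S`. Iterating this equation, `g` dominates every
partial sum of `Σₙ 1ₐ Pₛⁿ`, whose value at `a` is therefore at most `1 / cap(a)`.
Then pass to `ℝ`: on nonnegative elements bounded by a rational, the real part `ρ` is
superadditive and supermultiplicative, so `π⁽ⁿ⁾(a,z) ≤ ρ((1ₐ Pₛⁿ)(z))` for `z ∈ S`, and the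
partial sums of the Green series are at most `ρ(Σₙ (1ₐ Pₛⁿ)(a)) ≤ 1 / ρ(cap(a))`.
-/

open Finset

section RealPart

variable {k x y : K}

theorem rp_le {r : ℝ} (hk : 0 ≤ k) (h : ∀ q : ℚ, (q : K) ≤ k → (q : ℝ) ≤ r) : rp k ≤ r :=
  csSup_le ⟨0, 0, by simp, by simpa using hk⟩ (by rintro _ ⟨q, rfl, hq⟩; exact h q hq)

theorem le_rp {q q' : ℚ} (hq : (q : K) ≤ k) (hk : k ≤ q') : (q : ℝ) ≤ rp k := by
  refine le_csSup ⟨q', ?_⟩ ⟨q, rfl, hq⟩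
  rintro _ ⟨p, rfl, hp⟩
  exact_mod_cast hp.trans hk

theorem rp_ratCast (q : ℚ) : rp (q : K) = q :=
  IsGreatest.csSup_eq ⟨⟨q, rfl, le_rfl⟩, by rintro _ ⟨p, rfl, hp⟩; exact_mod_cast hp⟩

theorem rp_eq_zero_of_forall_ratCast_lt (h : ∀ q : ℚ, (q : K) < k) : rp k = 0 := by
  refine Real.sSup_of_not_bddAbove fun ⟨M, hM⟩ => ?_
  obtain ⟨q, hq⟩ := exists_rat_gt M
  exact (hM ⟨q, rfl, (h q).le⟩).not_gt hq

theorem rp_nonneg (hk : 0 ≤ k) : 0 ≤ rp k := by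
  by_cases hb : ∃ q : ℚ, k ≤ q
  · obtain ⟨q, hq⟩ := hb
    simpa using le_rp (q := 0) (by simpa using hk) hq
  · simp only [not_exists, not_le] at hb
    rw [rp_eq_zero_of_forall_ratCast_lt hb]

theorem rp_nonpos (hk : k ≤ 0) : rp k ≤ 0 :=
  Real.sSup_nonpos <| by
    rintro _ ⟨q, rfl, hq⟩
    exact_mod_cast hq.trans hk

theorem pos_of_rp_pos (h : 0 < rp k) : 0 < k :=
  lt_of_not_ge fun hk => h.not_ge (rp_nonpos hk)

/-- The rational bound matters: `rp` of an infinitely large element is the junk value `0`. -/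
theorem rp_add_le (hx : 0 ≤ x) (hy : 0 ≤ y) {q : ℚ} (hxy : x + y ≤ q) :
    rp x + rp y ≤ rp (x + y) := by
  have key : ∀ q₁ q₂ : ℚ, (q₁ : K) ≤ x → (q₂ : K) ≤ y → (q₁ + q₂ : ℝ) ≤ rp (x + y) :=
    fun q₁ q₂ h₁ h₂ => by
      exact_mod_cast le_rp (q := q₁ + q₂) (by push_cast; exact add_le_add h₁ h₂) hxy
  have hx' : rp x ≤ rp (x + y) - rp y :=
    rp_le hx fun q₁ h₁ => le_sub_comm.mp <| rp_le hy fun q₂ h₂ => by linarith [key q₁ q₂ h₁ h₂]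
  linarith

theorem rp_sum_le {ι : Type*} (s : Finset ι) {t : ι → K} (ht : ∀ i ∈ s, 0 ≤ t i) {q : ℚ}
    (hq : ∑ i ∈ s, t i ≤ q) : ∑ i ∈ s, rp (t i) ≤ rp (∑ i ∈ s, t i) := by
  induction s using Finset.cons_induction with
  | empty => simpa using rp_nonneg (le_refl (0 : K))
  | cons i s hi ih =>
    rw [sum_cons] at hq ⊢
    rw [sum_cons]
    have hti := ht i (mem_cons_self i s)
    have hts : ∀ j ∈ s, 0 ≤ t j := fun j hj => ht j (mem_cons_of_mem hj)
    calc rp (t i) + ∑ j ∈ s, rp (t j) ≤ rp (t i) + rp (∑ j ∈ s, t j) :=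
          add_le_add le_rfl (ih hts ((le_add_of_nonneg_left hti).trans hq))
      _ ≤ rp (t i + ∑ j ∈ s, t j) := rp_add_le hti (sum_nonneg hts) hq

theorem rp_le_of_pos {r : ℝ} (hk : 0 ≤ k) (hr : 0 ≤ r)
    (h : ∀ q : ℚ, 0 < q → (q : K) ≤ k → (q : ℝ) ≤ r) : rp k ≤ r :=
  rp_le hk fun q hq => (le_or_gt q 0).elim (fun h0 => (Rat.cast_nonpos.mpr h0).trans hr)
    fun hpos => h q hpos hq

theorem rp_mul_le (hx : 0 ≤ x) (hy : 0 ≤ y) : rp x * rp y ≤ rp (x * y) := by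
  have hxy := rp_nonneg (mul_nonneg hx hy)
  by_cases hbx : ∃ q : ℚ, x ≤ q
  swap
  · simp only [not_exists, not_le] at hbx
    simpa [rp_eq_zero_of_forall_ratCast_lt hbx] using hxy
  by_cases hby : ∃ q : ℚ, y ≤ q
  swap
  · simp only [not_exists, not_le] at hby
    simpa [rp_eq_zero_of_forall_ratCast_lt hby] using hxy
  obtain ⟨qx, hqx⟩ := hbx
  obtain ⟨qy, hqy⟩ := hby
  have hbound : x * y ≤ ((qx * qy : ℚ) : K) := by
    push_cast
    exact mul_le_mul hqx hqy hy (hx.trans hqx)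
  rcases (rp_nonneg hy).eq_or_lt with h0 | hpos
  · rw [← h0, mul_zero]
    exact hxy
  rw [← le_div_iff₀ hpos]
  refine rp_le_of_pos hx (by positivity) fun q₁ hq₁ h₁ => ?_
  have hq₁' : (0 : ℝ) < q₁ := by exact_mod_cast hq₁
  rw [le_div_iff₀ hpos, mul_comm, ← le_div_iff₀ hq₁']
  refine rp_le_of_pos hy (by positivity) fun q₂ hq₂ h₂ => ?_
  rw [le_div_iff₀ hq₁', mul_comm]
  exact_mod_cast le_rp (q := q₁ * q₂)
    (by push_cast; exact mul_le_mul h₁ h₂ (by exact_mod_cast hq₂.le) hx) hbound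

theorem rp_le_inv_rp_of_le_inv (hx : 0 ≤ x) (hxy : x ≤ y⁻¹) (hpos : 0 < rp y) :
    rp x ≤ (rp y)⁻¹ := by
  have hy := pos_of_rp_pos hpos
  have hxy' : x * y ≤ 1 := by
    simpa [hy.ne'] using mul_le_mul_of_nonneg_right hxy hy.le
  rw [← one_div, le_div_iff₀ hpos]
  calc rp x * rp y ≤ rp (x * y) := rp_mul_le hx hy.le
    _ ≤ 1 := rp_le (mul_nonneg hx hy.le) fun q hq => by exact_mod_cast hq.trans hxy'

end RealPart

section KilledPow

variable {R : Type*} [Semiring R] [PartialOrder R] [IsOrderedRing R]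

/-- The row vectors `e Pₛⁿ`, where `Pₛ` is the kernel `P` with the rows outside `S` deleted. -/
noncomputable def killedPow (P : V → V → R) (S : Finset V) (e : V → R) : ℕ → V → R
  | 0 => e
  | n + 1 => fun z => ∑ w ∈ S, killedPow P S e n w * P w z

variable {P : V → V → R} {S : Finset V} {e g : V → R}

theorem killedPow_nonneg (hP : ∀ w z, 0 ≤ P w z) (he : ∀ z, 0 ≤ e z) :
    ∀ n z, 0 ≤ killedPow P S e n z
  | 0, z => he z
  | n + 1, z => sum_nonneg fun w _ => mul_nonneg (killedPow_nonneg hP he n w) (hP w z)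

theorem sum_killedPow_le (hP : ∀ w z, 0 ≤ P w z) (hrow : ∀ w ∈ S, ∑ z ∈ S, P w z ≤ 1)
    (he : ∀ z, 0 ≤ e z) : ∀ n, ∑ z ∈ S, killedPow P S e n z ≤ ∑ z ∈ S, e z
  | 0 => le_rfl
  | n + 1 =>
    calc ∑ z ∈ S, ∑ w ∈ S, killedPow P S e n w * P w z
        = ∑ w ∈ S, killedPow P S e n w * ∑ z ∈ S, P w z := by
          rw [sum_comm]
          simp only [mul_sum]
      _ ≤ ∑ w ∈ S, killedPow P S e n w :=
          sum_le_sum fun w hw =>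
            mul_le_of_le_one_right (killedPow_nonneg hP he n w) (hrow w hw)
      _ ≤ ∑ z ∈ S, e z := sum_killedPow_le hP hrow he n

theorem sum_range_killedPow_le (hP : ∀ w z, 0 ≤ P w z) (hg : ∀ z ∈ S, 0 ≤ g z)
    (hsuper : ∀ z ∈ S, e z + ∑ w ∈ S, g w * P w z ≤ g z) :
    ∀ N, ∀ z ∈ S, ∑ n ∈ range N, killedPow P S e n z ≤ g z
  | 0, z, hz => by simpa using hg z hz
  | N + 1, z, hz =>
    calc ∑ n ∈ range (N + 1), killedPow P S e n z
        = e z + ∑ w ∈ S, (∑ n ∈ range N, killedPow P S e n w) * P w z := by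
          rw [sum_range_succ', add_comm]
          simp only [killedPow, sum_mul]
          rw [sum_comm]
      _ ≤ e z + ∑ w ∈ S, g w * P w z := by
          gcongr with w hw
          · exact hP w z
          · exact sum_range_killedPow_le hP hg hsuper N w hw
      _ ≤ g z := hsuper z hz

end KilledPow

namespace Graph

variable (G : Graph V K) {S : Finset V} {a x z : V} {f v : V → K}

theorem hasFiniteSupport_w_mul (x : V) (f : V → K) :
    Function.HasFiniteSupport fun y => G.w x y * f y :=
  (G.locFin x).subset (Function.support_mul_subset_left _ _)

theorem deg_nonneg (x : V) : 0 ≤ G.deg x :=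
  finsum_nonneg (G.nonneg x)

theorem p_nonneg (x y : V) : 0 ≤ G.p x y :=
  div_nonneg (G.nonneg x y) (G.deg_nonneg x)

theorem sum_w_le_deg (x : V) (s : Finset V) : ∑ y ∈ s, G.w x y ≤ G.deg x := by
  have hsupp : Function.support (G.w x) ⊆ ↑(s ∪ (G.locFin x).toFinset) := fun y hy => by
    simpa using Or.inr hy
  rw [deg, finsum_eq_sum_of_support_subset _ hsupp]
  exact sum_le_sum_of_subset_of_nonneg subset_union_left fun y _ _ => G.nonneg x y

theorem sum_p_le_one (hx : 0 < G.deg x) (s : Finset V) : ∑ y ∈ s, G.p x y ≤ 1 := by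
  simp only [p, ← sum_div]
  exact div_le_one_of_le₀ (G.sum_w_le_deg x s) hx.le

theorem lap_mul_deg (hx : G.deg x ≠ 0) (f : V → K) :
    G.lap f x * G.deg x = f x * G.deg x - ∑ᶠ y, G.w x y * f y := by
  rw [lap, div_mul_cancel₀ _ hx]
  simp only [mul_sub]
  rw [finsum_sub_distrib (G.hasFiniteSupport_w_mul x fun _ => f x)
    (G.hasFiniteSupport_w_mul x f), deg, mul_finsum]
  simp only [mul_comm]

theorem eq_of_lap_eq_zero_of_forall_le (hx : G.lap f x = 0) (hdeg : 0 < G.deg x)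
    (hmin : ∀ y, f x ≤ f y) {y : V} (hxy : G.Adj x y) : f y = f x := by
  refine ((hmin y).eq_or_lt).elim Eq.symm fun hlt => absurd hx ?_
  have hpos : 0 < ∑ᶠ z, G.w x z * (f z - f x) :=
    finsum_pos (fun z => mul_nonneg (G.nonneg x z) (sub_nonneg.2 (hmin z)))
      ⟨y, mul_pos hxy (sub_pos.2 hlt)⟩ (G.hasFiniteSupport_w_mul x _)
  have hsum : ∑ᶠ z, G.w x z * (f x - f z) = -∑ᶠ z, G.w x z * (f z - f x) := by
    rw [← finsum_neg_distrib]
    congr 1 with z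
    ring
  rw [lap, hsum]
  exact div_ne_zero (neg_ne_zero.2 hpos.ne') hdeg.ne'

/-- Reversibility `b(w) p(w,z) = b(z,w)` summed against `f`. -/
theorem sum_mul_deg_mul_p (hf : ∀ x ∉ S, f x = 0) (hdeg : ∀ x, 0 < G.deg x) (z : V) :
    ∑ w ∈ S, f w * G.deg w * G.p w z = f z * G.deg z - G.lap f z * G.deg z := by
  have hsupp : Function.support (fun w => G.w z w * f w) ⊆ ↑S := fun w hw => by
    by_contra hwS
    exact hw (by simp [hf w hwS])
  rw [G.lap_mul_deg (hdeg z).ne', sub_sub_cancel, finsum_eq_sum_of_support_subset _ hsupp]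
  refine sum_congr rfl fun w _ => ?_
  rw [p, G.symm w z]
  field_simp [(hdeg w).ne']

theorem matpow_pi_succ_of_mem (hz : z ∈ S) (x : V) (n : ℕ) :
    matpow (G.pi ↑S) (n + 1) x z = ∑ w ∈ S, matpow (G.pi ↑S) n x w * rp (G.p w z) := by
  have hsupp : Function.support (fun w => matpow (G.pi ↑S) n x w * G.pi ↑S w z) ⊆ ↑S :=
    fun w hw => by
      by_contra hwS
      have hwz : w ≠ z := by rintro rfl; exact hwS hz
      exact hw (by simp [pi, hwS, hwz])
  simp only [matpow]
  rw [finsum_eq_sum_of_support_subset _ hsupp]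
  exact sum_congr rfl fun w hw => by simp [pi, hw]

theorem killedPow_p_single_nonneg (a : V) (n : ℕ) (z : V) :
    0 ≤ killedPow G.p S (Pi.single a 1) n z :=
  killedPow_nonneg G.p_nonneg (Pi.single_nonneg.2 zero_le_one) n z

theorem killedPow_p_le_one (hdeg : ∀ x, 0 < G.deg x) (a : V) (n : ℕ) (hz : z ∈ S) :
    killedPow G.p S (Pi.single a 1) n z ≤ 1 := by
  calc killedPow G.p S (Pi.single a 1) n z ≤ ∑ y ∈ S, killedPow G.p S (Pi.single a 1) n y :=
        single_le_sum (fun y _ => G.killedPow_p_single_nonneg a n y) hz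
    _ ≤ ∑ y ∈ S, (Pi.single a 1 : V → K) y :=
        sum_killedPow_le G.p_nonneg (fun w _ => G.sum_p_le_one (hdeg w) S)
          (Pi.single_nonneg.2 zero_le_one) n
    _ ≤ 1 := by
        rw [sum_pi_single']
        split_ifs <;> norm_num

theorem matpow_pi_le_rp_killedPow (hdeg : ∀ x, 0 < G.deg x) (a : V) :
    ∀ n, ∀ z ∈ S, matpow (G.pi ↑S) n a z ≤ rp (killedPow G.p S (Pi.single a 1) n z)
  | 0, z, _ => by
    by_cases hza : z = a
    · subst hza
      simpa [matpow, killedPow] using (rp_ratCast (K := K) 1).ge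
    · simp [matpow, killedPow, hza, Ne.symm hza, rp_nonneg]
  | n + 1, z, hz => by
    have hk := G.killedPow_p_single_nonneg (S := S) a n
    rw [G.matpow_pi_succ_of_mem hz]
    calc ∑ w ∈ S, matpow (G.pi ↑S) n a w * rp (G.p w z)
        ≤ ∑ w ∈ S, rp (killedPow G.p S (Pi.single a 1) n w) * rp (G.p w z) :=
          sum_le_sum fun w hw => mul_le_mul_of_nonneg_right
            (matpow_pi_le_rp_killedPow hdeg a n w hw) (rp_nonneg (G.p_nonneg w z))
      _ ≤ ∑ w ∈ S, rp (killedPow G.p S (Pi.single a 1) n w * G.p w z) :=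
          sum_le_sum fun w _ => rp_mul_le (hk w) (G.p_nonneg w z)
      _ ≤ rp (killedPow G.p S (Pi.single a 1) (n + 1) z) :=
          rp_sum_le S (fun w _ => mul_nonneg (hk w) (G.p_nonneg w z)) (q := 1)
            (by rw [Rat.cast_one]; exact G.killedPow_p_le_one hdeg a (n + 1) hz)

variable {G}

theorem ConnectedOn.propagate {S : Set V} (hS : G.ConnectedOn S) {Q : V → Prop}
    (hQ : ∀ x ∈ S, ∀ y ∈ S, G.Adj x y → Q x → Q y) {x y : V} (hx : x ∈ S) (hy : y ∈ S)
    (hQx : Q x) : Q y := by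
  obtain ⟨n, p, rfl, rfl, hpS, hadj⟩ := hS x hx y hy
  have hpath : ∀ i ≤ n, Q (p i) := by
    intro i
    induction i with
    | zero => exact fun _ => hQx
    | succ i ih =>
      exact fun hi => hQ _ (hpS i (by omega)) _ (hpS _ hi) (hadj i hi) (ih (by omega))
  exact hpath n le_rfl

theorem IsDirichletSol.nonneg (hv : G.IsDirichletSol S a v) (hS : G.ConnectedOn ↑S) (ha : a ∈ S)
    (hdeg : ∀ x ∈ S, 0 < G.deg x) (x : V) : 0 ≤ v x := by
  obtain ⟨hva, hharm, hout⟩ := hv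
  obtain ⟨x₀, hx₀, hmin⟩ := S.exists_min_image v ⟨a, ha⟩
  by_contra! hx
  have hneg : v x₀ < 0 := by
    by_cases hxS : x ∈ S
    · exact (hmin x hxS).trans_lt hx
    · exact absurd (hout x hxS) hx.ne
  have hmin' : ∀ y, v x₀ ≤ v y := fun y => by
    by_cases hy : y ∈ S
    · exact hmin y hy
    · exact (hout y hy).symm ▸ hneg.le
  have hconst : v a = v x₀ := by
    refine hS.propagate (Q := fun y => v y = v x₀) (fun y hy z _ hyz hQ => ?_) hx₀ ha rfl
    have hya : y ≠ a := by rintro rfl; linarith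
    rw [G.eq_of_lap_eq_zero_of_forall_le (hharm y hy hya) (hdeg y hy) (hQ ▸ hmin') hyz, hQ]
  linarith

theorem IsDirichletSol.sum_range_killedPow_le_inv_lap (hv : G.IsDirichletSol S a v)
    (hS : G.ConnectedOn ↑S) (ha : a ∈ S) (hdeg : ∀ x, 0 < G.deg x) (hc : 0 < G.lap v a)
    (N : ℕ) : ∑ n ∈ range N, killedPow G.p S (Pi.single a 1) n a ≤ (G.lap v a)⁻¹ := by
  have hv0 := hv.nonneg hS ha fun x _ => hdeg x
  obtain ⟨hva, hharm, hout⟩ := hv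
  set c := G.lap v a
  have hca : 0 < c * G.deg a := mul_pos hc (hdeg a)
  have hgreen : ∀ z ∈ S, (Pi.single a 1 : V → K) z
      + ∑ w ∈ S, v w * G.deg w / (c * G.deg a) * G.p w z = v z * G.deg z / (c * G.deg a) := by
    intro z hz
    simp only [div_mul_eq_mul_div, ← sum_div]
    rw [G.sum_mul_deg_mul_p hout hdeg z]
    by_cases hza : z = a
    · subst hza
      have hdz := (hdeg z).ne'
      rw [hva, Pi.single_eq_same]
      field_simp
      ring
    · rw [hharm z hz hza, Pi.single_eq_of_ne hza]
      simp
  have hbound := sum_range_killedPow_le G.p_nonneg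
    (fun z _ => div_nonneg (mul_nonneg (hv0 z) (G.deg_nonneg z)) hca.le)
    (fun z hz => (hgreen z hz).le) N a ha
  convert hbound using 1
  rw [hva]
  field_simp [(hdeg a).ne']

end Graph

theorem GK_ge_green_sum_general {V K : Type*} [Field K] [LinearOrder K] [IsStrictOrderedRing K]
    (G : Graph V K) (hdeg : ∀ x, 0 < G.deg x)
    (S : Finset V) (hS : G.ConnectedOn ↑S) (a : V) (ha : a ∈ S)
    (v : V → K) (hv : G.IsDirichletSol S a v) :
    ∑' n : ℕ, ENNReal.ofReal (matpow (G.pi ↑S) n a a) ≤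
      (ENNReal.ofReal (rp ((G.lap v a * G.deg a) / G.deg a)))⁻¹ := by
  rw [mul_div_cancel_right₀ _ (hdeg a).ne']
  rcases le_or_gt (rp (G.lap v a)) 0 with hc | hc
  · simp [ENNReal.ofReal_of_nonpos hc]
  refine ENNReal.tsum_le_of_sum_range_le fun N => ?_
  set k := killedPow G.p S (Pi.single a 1)
  have hk : ∀ n, 0 ≤ k n a := fun n => G.killedPow_p_single_nonneg a n a
  have hσ : ∑ n ∈ range N, k n a ≤ ((N : ℚ) : K) := by
    simpa using sum_le_sum fun n (_ : n ∈ range N) => G.killedPow_p_le_one hdeg a n ha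
  calc ∑ n ∈ range N, ENNReal.ofReal (matpow (G.pi ↑S) n a a)
      ≤ ∑ n ∈ range N, ENNReal.ofReal (rp (k n a)) :=
        sum_le_sum fun n _ => ENNReal.ofReal_le_ofReal (G.matpow_pi_le_rp_killedPow hdeg a n a ha)
    _ = ENNReal.ofReal (∑ n ∈ range N, rp (k n a)) :=
        (ENNReal.ofReal_sum_of_nonneg fun n _ => rp_nonneg (hk n)).symm
    _ ≤ ENNReal.ofReal (rp (∑ n ∈ range N, k n a)) :=
        ENNReal.ofReal_le_ofReal (rp_sum_le _ (fun n _ => hk n) hσ)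
    _ ≤ ENNReal.ofReal (rp (G.lap v a))⁻¹ :=
        ENNReal.ofReal_le_ofReal <| rp_le_inv_rp_of_le_inv (sum_nonneg fun n _ => hk n)
          (hv.sum_range_killedPow_le_inv_lap hS ha hdeg (pos_of_rp_pos hc) N) hc
    _ = (ENNReal.ofReal (rp (G.lap v a)))⁻¹ := ENNReal.ofReal_inv_of_pos hc

/-- `G_K(a) = 1/ρ(cap_K(a)/b(a)) ≥ Σ_{n} π_K^{(n)}(a,a)` (in `[0,∞]`). -/
theorem GK_ge_green_sum {V K : Type*} [Field K] [LinearOrder K] [IsStrictOrderedRing K] [Countable V]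
    (G : Graph V K) (hconn : G.Connected) (hdeg : ∀ x, 0 < G.deg x)
    (S : Finset V) (hS : G.ConnectedOn ↑S) (a : V) (ha : a ∈ S)
    (v : V → K) (hv : G.IsDirichletSol S a v) :
    ∑' n : ℕ, ENNReal.ofReal (matpow (G.pi ↑S) n a a) ≤
      (ENNReal.ofReal (rp ((G.lap v a * G.deg a) / G.deg a)))⁻¹ :=
  GK_ge_green_sum_general G hdeg S hS a ha v hv

end NAG
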